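/- arXiv:2502.01839 — 2 statements merged into one kernel-verified Lean document; each statement's English description precedes it below -/
import Mathlib

section
/- The number of triples of nonnegative integers (a, b, c) satisfying a + b + c = 300 and a²b + a²c + b²a + b²c + c²a + c²b = 6,000,000 is 601. -/
def A : Finset (ℕ × ℕ × ℕ) := (Finset.range 201).image (fun b => (100, b, 200 - b))
def B : Finset (ℕ × ℕ × ℕ) := ((Finset.range 201).erase 100).image (fun a => (a, 100, 200 - a))
def C : Finset (ℕ × ℕ × ℕ) := ((Finset.range 201).erase 100).image (fun a => (a, 200 - a, 100))

lemma cardA : A.card = 201 := by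
  rw [A, Finset.card_image_of_injective _ (fun x y h => by simp only [Prod.mk.injEq] at h; exact h.2.1)]
  simp

lemma cardB : B.card = 200 := by
  rw [B, Finset.card_image_of_injective _ (fun x y h => by simp only [Prod.mk.injEq] at h; exact h.1)]
  rw [Finset.card_erase_of_mem (by simp)]; simp

lemma cardC : C.card = 200 := by
  rw [C, Finset.card_image_of_injective _ (fun x y h => by simp only [Prod.mk.injEq] at h; exact h.1)]
  rw [Finset.card_erase_of_mem (by simp)]; simp

lemma dAB : Disjoint A B := by
  rw [Finset.disjoint_left]
  rintro ⟨x, y, z⟩ hA hB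
  simp only [A, B, Finset.mem_image, Finset.mem_erase, Finset.mem_range] at hA hB
  obtain ⟨b, _, hb⟩ := hA
  obtain ⟨a, ⟨ha, _⟩, ha'⟩ := hB
  rw [Prod.mk.injEq, Prod.mk.injEq] at hb ha'
  omega

lemma dAC : Disjoint A C := by
  rw [Finset.disjoint_left]
  rintro ⟨x, y, z⟩ hA hC
  simp only [A, C, Finset.mem_image, Finset.mem_erase, Finset.mem_range] at hA hC
  obtain ⟨b, _, hb⟩ := hA
  obtain ⟨a, ⟨ha, _⟩, ha'⟩ := hC
  rw [Prod.mk.injEq, Prod.mk.injEq] at hb ha'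
  omega

lemma dBC : Disjoint B C := by
  rw [Finset.disjoint_left]
  rintro ⟨x, y, z⟩ hB hC
  simp only [B, C, Finset.mem_image, Finset.mem_erase, Finset.mem_range] at hB hC
  obtain ⟨b, ⟨hb1, hb2⟩, hb⟩ := hB
  obtain ⟨a, ⟨ha, _⟩, ha'⟩ := hC
  rw [Prod.mk.injEq, Prod.mk.injEq] at hb ha'
  omega

lemma cardT : (A ∪ B ∪ C).card = 601 := by
  rw [Finset.card_union_of_disjoint (by
    rw [Finset.disjoint_union_left]; exact ⟨dAC, dBC⟩),
    Finset.card_union_of_disjoint dAB, cardA, cardB, cardC]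

lemma key (a b c : ℕ) (hs : a + b + c = 300) :
    a^2*b + a^2*c + b^2*a + b^2*c + c^2*a + c^2*b = 6000000 ↔
    (a = 100 ∨ b = 100 ∨ c = 100) := by
  zify at *
  constructor
  · intro he
    have h3 : (3:ℤ) * ((100 - a) * (100 - b) * (100 - c)) = 0 := by
      linear_combination (-30000 - ((a:ℤ)*b + b*c + c*a)) * hs + he
    have h : ((100:ℤ) - a) * (100 - b) * (100 - c) = 0 := by linarith
    rcases mul_eq_zero.1 h with h | h
    · rcases mul_eq_zero.1 h with h | h
      · left; linarith
      · right; left; linarith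
    · right; right; linarith
  · rintro (h | h | h)
    · linear_combination (30000 + ((a:ℤ)*b + b*c + c*a)) * hs - (3*(100 - (b:ℤ))*(100 - c)) * h
    · linear_combination (30000 + ((a:ℤ)*b + b*c + c*a)) * hs - (3*(100 - (a:ℤ))*(100 - c)) * h
    · linear_combination (30000 + ((a:ℤ)*b + b*c + c*a)) * hs - (3*(100 - (a:ℤ))*(100 - b)) * h

lemma memT (a b c : ℕ) : (a, b, c) ∈ A ∪ B ∪ C ↔
    a + b + c = 300 ∧ (a = 100 ∨ b = 100 ∨ c = 100) := by
  simp only [Finset.mem_union, A, B, C, Finset.mem_image, Finset.mem_erase, Finset.mem_range,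
    Prod.mk.injEq]
  constructor
  · rintro ((⟨x, hx, h1, h2, h3⟩ | ⟨x, ⟨hx1, hx2⟩, h1, h2, h3⟩) | ⟨x, ⟨hx1, hx2⟩, h1, h2, h3⟩) <;>
      omega
  · rintro ⟨hs, (h | h | h)⟩
    · exact Or.inl (Or.inl ⟨b, by omega, by omega, rfl, by omega⟩)
    · by_cases ha : a = 100
      · exact Or.inl (Or.inl ⟨b, by omega, by omega, rfl, by omega⟩)
      · exact Or.inl (Or.inr ⟨a, ⟨ha, by omega⟩, rfl, by omega, by omega⟩)
    · by_cases ha : a = 100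
      · exact Or.inl (Or.inl ⟨b, by omega, by omega, rfl, by omega⟩)
      · exact Or.inr ⟨a, ⟨ha, by omega⟩, rfl, by omega, by omega⟩

theorem stmt_0 :
    {t : ℕ × ℕ × ℕ | t.1 + t.2.1 + t.2.2 = 300 ∧
      t.1 ^ 2 * t.2.1 + t.1 ^ 2 * t.2.2 + t.2.1 ^ 2 * t.1 + t.2.1 ^ 2 * t.2.2 +
        t.2.2 ^ 2 * t.1 + t.2.2 ^ 2 * t.2.1 = 6000000}.ncard = 601 := by
  have hset : {t : ℕ × ℕ × ℕ | t.1 + t.2.1 + t.2.2 = 300 ∧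
      t.1 ^ 2 * t.2.1 + t.1 ^ 2 * t.2.2 + t.2.1 ^ 2 * t.1 + t.2.1 ^ 2 * t.2.2 +
        t.2.2 ^ 2 * t.1 + t.2.2 ^ 2 * t.2.1 = 6000000} = ↑(A ∪ B ∪ C) := by
    ext ⟨a, b, c⟩
    rw [Set.mem_setOf_eq, Finset.mem_coe, memT]
    constructor
    · rintro ⟨hs, he⟩
      exact ⟨hs, (key a b c hs).1 (by linarith [he])⟩
    · rintro ⟨hs, h⟩
      refine ⟨hs, ?_⟩
      have := (key a b c hs).2 h
      linarith
  rw [hset, Set.ncard_coe_finset, cardT]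
end

section
/- The only integers n ≥ 3 such that the divisors of n! listed in increasing order have nondecreasing consecutive differences are n = 3 and n = 4. -/
/-!
For `n ≥ 5` let `q` be the least prime above `n`. By Bertrand's postulate `q < 2n`, so
`q + 1`, `q - 1` and `q - 2` all divide `N = n!` (the last one because, if it exceeds `n`, it is
composite by minimality of `q`), while `q` does not. Hence `N/(q+1) < N/(q-1) < N/(q-2)` are
consecutive divisors of `N`, and their gaps `2N/(q²-1)` and `N/((q-1)(q-2))` decrease as soon as
`q > 5`. The cases `n = 3, 4` are checked directly.
-/

/-- The divisors of `N` listed in increasing order have nondecreasing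
consecutive differences. -/
def NondecGaps (N : ℕ) : Prop :=
  let l := N.divisors.sort (· ≤ ·)
  ∀ i : ℕ, i + 2 < l.length → l[i + 1]! - l[i]! ≤ l[i + 2]! - l[i + 1]!

open Nat

theorem List.SortedLT.exists_getElem_succ_eq {α : Type*} [LinearOrder α] {l : List α}
    (hl : l.SortedLT) {i : ℕ} (hi : i < l.length) {b : α} (hb : b ∈ l) (hib : l[i] < b)
    (hgap : ∀ x ∈ l, l[i] < x → b ≤ x) : ∃ h : i + 1 < l.length, l[i + 1] = b := by
  obtain ⟨j, hj, rfl⟩ := List.mem_iff_getElem.1 hb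
  have hij : i < j := hl.getElem_lt_getElem_iff.1 hib
  refine ⟨by omega, le_antisymm (hl.getElem_le_getElem_iff.2 hij) ?_⟩
  exact hgap _ (List.getElem_mem _) (hl.getElem_lt_getElem_iff.2 (Nat.lt_succ_self i))

theorem not_nondecGaps_of_consecutive {N a b c : ℕ} (ha : a ∈ N.divisors)
    (hb : b ∈ N.divisors) (hc : c ∈ N.divisors) (hbc : b < c)
    (hgap₁ : ∀ x ∈ N.divisors, a < x → b ≤ x) (hgap₂ : ∀ x ∈ N.divisors, b < x → c ≤ x)
    (hgaps : c - b < b - a) : ¬ NondecGaps N := by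
  intro H
  set l := N.divisors.sort (· ≤ ·)
  have hl : l.SortedLT := Finset.sortedLT_sort _
  have hmem : ∀ {x}, x ∈ l ↔ x ∈ N.divisors := Finset.mem_sort _
  obtain ⟨i, hi, rfl⟩ := List.mem_iff_getElem.1 (hmem.2 ha)
  obtain ⟨hi₁, rfl⟩ := hl.exists_getElem_succ_eq hi (hmem.2 hb) (by omega)
    fun x hx => hgap₁ x (hmem.1 hx)
  obtain ⟨hi₂, rfl⟩ := hl.exists_getElem_succ_eq hi₁ (hmem.2 hc) hbc
    fun x hx => hgap₂ x (hmem.1 hx)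
  have := H i hi₂
  rw [getElem!_pos l i hi, getElem!_pos l (i + 1) hi₁, getElem!_pos l (i + 1 + 1) hi₂] at this
  omega

theorem nondecGaps_of_divisors_eq {N : ℕ} (l : List ℕ) (hl : l.SortedLT)
    (hN : N.divisors = l.toFinset)
    (hgaps : ∀ i < l.length - 2, l[i + 1]! - l[i]! ≤ l[i + 2]! - l[i + 1]!) :
    NondecGaps N := by
  have hsort : N.divisors.sort (· ≤ ·) = l := by
    rw [hN]; exact (List.toFinset_sort _ hl.nodup).2 hl.sortedLE.pairwise
  intro i hi
  rw [hsort] at hi ⊢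
  exact hgaps i (by omega)

theorem div_le_of_div_lt {N d e x : ℕ} (hx : x ∈ N.divisors) (hd : 0 < d)
    (hlt : N / d < x) (hgap : ∀ y, y ∣ N → y < d → y ≤ e) : N / e ≤ x := by
  obtain ⟨hxN, hN⟩ := Nat.mem_divisors.1 hx
  have hx0 : 0 < x := Nat.pos_of_dvd_of_pos hxN (Nat.pos_of_ne_zero hN)
  have hy : N / x < d := (Nat.div_lt_iff_lt_mul hx0).2 <| by
    have := (Nat.div_lt_iff_lt_mul hd).1 hlt; linarith
  calc N / e ≤ N / (N / x) :=
        Nat.div_le_div_left (hgap _ (Nat.div_dvd_of_dvd hxN) hy)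
          (Nat.div_pos (Nat.le_of_dvd (Nat.pos_of_ne_zero hN) hxN) hx0)
    _ = x := Nat.div_div_self hxN hN

theorem div_add_div_lt_two_mul_div {N u : ℕ} (hN : 0 < N) (hu : 3 < u) (h₁ : u + 3 ∣ N)
    (h₂ : u + 1 ∣ N) (h₃ : u ∣ N) : N / (u + 3) + N / u < 2 * (N / (u + 1)) := by
  have ha := Nat.div_mul_cancel h₁
  have hb := Nat.div_mul_cancel h₂
  have hc := Nat.div_mul_cancel h₃
  set a := N / (u + 3)
  set b := N / (u + 1)
  set c := N / u
  have key : (a + c) * (u * (u + 1) * (u + 3)) < 2 * b * (u * (u + 1) * (u + 3)) := by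
    have e1 : (a + c) * (u * (u + 1) * (u + 3)) = N * ((u + 1) * (2 * u + 3)) := by
      linear_combination (u * (u + 1)) * ha + ((u + 1) * (u + 3)) * hc
    have e2 : 2 * b * (u * (u + 1) * (u + 3)) = N * (2 * u * (u + 3)) := by
      linear_combination (2 * u * (u + 3)) * hb
    rw [e1, e2]
    exact Nat.mul_lt_mul_of_pos_left (by nlinarith) hN
  exact Nat.lt_of_mul_lt_mul_right key

theorem mul_dvd_factorial {a b n : ℕ} (ha : 0 < a) (hab : a < b) (hb : b ≤ n) :
    a * b ∣ n ! :=
  calc a * b ∣ (b - 1)! * b := Nat.mul_dvd_mul_right (Nat.dvd_factorial ha (by omega)) b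
    _ = b ! := by rw [mul_comm, Nat.mul_factorial_pred (by omega)]
    _ ∣ n ! := Nat.factorial_dvd_factorial hb

theorem dvd_factorial_of_not_prime {k n : ℕ} (hk : 1 < k) (hkp : ¬ k.Prime)
    (hkn : k + 3 ≤ 2 * n) : k ∣ n ! := by
  obtain ⟨t, ht⟩ := Nat.minFac_dvd k
  have hp : 2 ≤ k.minFac := (Nat.minFac_prime hk.ne').two_le
  have hpt : k.minFac ≤ t := by
    have := Nat.minFac_sq_le_self (by omega) hkp
    nlinarith
  rw [ht]
  rcases hpt.lt_or_eq with hlt | heq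
  · exact mul_dvd_factorial (by omega) hlt (by nlinarith)
  · rw [← heq]
    exact (Nat.mul_dvd_mul_left _ (Dvd.intro_left 2 rfl)).trans
      (mul_dvd_factorial (by omega) (by omega) (by nlinarith))

theorem not_nondecGaps_of_not_dvd {N q : ℕ} (hN : 0 < N) (hq : 5 < q) (hqN : ¬ q ∣ N)
    (h₁ : q + 1 ∣ N) (h₂ : q - 1 ∣ N) (h₃ : q - 2 ∣ N) : ¬ NondecGaps N := by
  obtain ⟨u, rfl⟩ : ∃ u, q = u + 2 := ⟨q - 2, by omega⟩
  replace h₁ : u + 3 ∣ N := h₁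
  replace h₂ : u + 1 ∣ N := h₂
  replace h₃ : u ∣ N := h₃
  have hmem : ∀ {d}, d ∣ N → N / d ∈ N.divisors := fun hd =>
    Nat.mem_divisors.2 ⟨Nat.div_dvd_of_dvd hd, hN.ne'⟩
  have hbc : N / (u + 1) < N / u := by
    rw [Nat.lt_div_iff_mul_lt' h₃]
    have hb := Nat.div_mul_cancel h₂
    have := Nat.div_pos (Nat.le_of_dvd hN h₂) (by omega : 0 < u + 1)
    nlinarith
  refine not_nondecGaps_of_consecutive (hmem h₁) (hmem h₂) (hmem h₃) hbc ?_ ?_ ?_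
  · refine fun x hx hlt => div_le_of_div_lt hx (by omega) hlt fun y hy hyq => ?_
    have : y ≠ u + 2 := fun h => hqN (h ▸ hy)
    omega
  · exact fun x hx hlt => div_le_of_div_lt hx (by omega) hlt fun y _ hy => by omega
  · have := div_add_div_lt_two_mul_div hN (by omega) h₁ h₂ h₃
    omega

theorem not_nondecGaps_factorial {n : ℕ} (hn : 5 ≤ n) : ¬ NondecGaps n ! := by
  have hex : ∃ q, n < q ∧ q.Prime := Nat.exists_infinite_primes (n + 1)
  have hleast : ∃ q, (n < q ∧ q.Prime) ∧ ∀ m < q, ¬ (n < m ∧ m.Prime) :=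
    ⟨Nat.find hex, Nat.find_spec hex, fun _ => Nat.find_min hex⟩
  obtain ⟨q, ⟨hnq, hq⟩, hq_min⟩ := hleast
  have hq_odd : q % 2 = 1 := Nat.odd_iff.1 (hq.odd_of_ne_two (by omega))
  have hq_le : q ≤ 2 * n := by
    obtain ⟨p, hp, hnp, hp2n⟩ := Nat.exists_prime_lt_and_le_two_mul n (by omega)
    exact (not_lt.1 fun h => hq_min p h ⟨hnp, hp⟩).trans hp2n
  have hdvd_even : ∀ m, 3 ≤ m → m ≤ n → 2 * m ∣ n ! := fun m h3 hm =>
    mul_dvd_factorial (by omega) (by omega) hm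
  refine not_nondecGaps_of_not_dvd (q := q) (Nat.factorial_pos n) (by omega) ?_ ?_ ?_ ?_
  · rw [hq.dvd_factorial]; omega
  · convert hdvd_even ((q + 1) / 2) (by omega) (by omega) using 1; omega
  · convert hdvd_even ((q - 1) / 2) (by omega) (by omega) using 1; omega
  · by_cases hqn : q - 2 ≤ n
    · exact Nat.dvd_factorial (by omega) hqn
    · exact dvd_factorial_of_not_prime (by omega)
        (fun h => hq_min (q - 2) (by omega) ⟨by omega, h⟩) (by omega)

theorem stmt_12 (n : ℕ) (hn : 3 ≤ n) :
    NondecGaps (Nat.factorial n) ↔ n = 3 ∨ n = 4 := by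
  constructor
  · intro h
    by_contra hn'
    exact not_nondecGaps_factorial (by omega) h
  · rintro (rfl | rfl)
    · exact nondecGaps_of_divisors_eq [1, 2, 3, 6] (by decide) (by decide) (by decide)
    · exact nondecGaps_of_divisors_eq [1, 2, 3, 4, 6, 8, 12, 24] (by decide) (by decide)
        (by decide)
end
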